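/- Let φ : E → F be a morphism of ℤ-filtered cochain complexes of modules over a ring R, where the filtrations are decreasing and both are complete (Fil^p E = lim_{q→∞} Fil^p E / Fil^q E and similarly for F, with Fil^∞ = 0); if the induced map Gr^p E → Gr^p F is a quasi-isomorphism for every p ∈ ℤ, then Fil^p E → Fil^p F is a quasi-isomorphism for every p. -/

import Mathlib

open CategoryTheory
universe u

namespace FiltAux

/-! ### Elementwise homology toolkit for `ModuleCat` -/

lemma mcomp_apply {R : Type u} [Ring R] {M N P : ModuleCat.{u} R} (f : M ⟶ N) (g : N ⟶ P)
    (x : M) : (f ≫ g) x = g (f x) := rfl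

variable {R : Type u} [Ring R]

lemma homologyπ_surjective (S : ShortComplex (ModuleCat.{u} R)) (h : S.homology) :
    ∃ c, S.homologyπ c = h :=
  (ModuleCat.epi_iff_surjective S.homologyπ).1 inferInstance h

lemma g_iCycles (S : ShortComplex (ModuleCat.{u} R)) (c : S.cycles) :
    S.g (S.iCycles c) = 0 := by
  have := ConcreteCategory.congr_hom S.iCycles_g c
  rw [mcomp_apply] at this
  simpa using this

lemma exists_cycles (S : ShortComplex (ModuleCat.{u} R)) (x : S.X₂) (hx : S.g x = 0) :
    ∃ c, S.iCycles c = x := by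
  refine ⟨S.moduleCatCyclesIso.inv ⟨x, hx⟩, ?_⟩
  have := S.moduleCatCyclesIso_inv_iCycles_apply ⟨x, hx⟩
  exact this

lemma homologyπ_eq_zero_iff (S : ShortComplex (ModuleCat.{u} R)) (c : S.cycles) :
    S.homologyπ c = 0 ↔ ∃ x₁ : S.X₁, S.f x₁ = S.iCycles c := by
  have hinj : Function.Injective S.moduleCatHomologyIso.hom :=
    (ModuleCat.mono_iff_injective _).1 inferInstance
  have key : S.moduleCatHomologyIso.hom (S.homologyπ c)
      = S.moduleCatLeftHomologyData.π (S.moduleCatCyclesIso.hom c) :=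
    S.π_moduleCatCyclesIso_hom_apply c
  constructor
  · intro h
    have h2 : (Submodule.Quotient.mk (p := LinearMap.range S.moduleCatToCycles)
        (S.moduleCatCyclesIso.hom c)) = 0 := by
      have := key; rw [h, map_zero] at this; exact this.symm
    obtain ⟨x₁, hx₁⟩ := (LinearMap.mem_range).1 ((Submodule.Quotient.mk_eq_zero _).1 h2)
    refine ⟨x₁, ?_⟩
    have := congrArg Subtype.val hx₁
    exact this.trans
      (show (S.moduleCatCyclesIso.hom c).1 = S.iCycles c from
        S.moduleCatCyclesIso_hom_i_apply c)
  · rintro ⟨x₁, hx₁⟩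
    apply hinj
    rw [key, map_zero]
    show (Submodule.Quotient.mk (p := LinearMap.range S.moduleCatToCycles)
        (S.moduleCatCyclesIso.hom c)) = 0
    refine (Submodule.Quotient.mk_eq_zero _).2 ⟨x₁, ?_⟩
    apply Subtype.ext
    exact
      hx₁.trans ((show (S.moduleCatCyclesIso.hom c).1 = S.iCycles c from
        S.moduleCatCyclesIso_hom_i_apply c)).symm

lemma homologyMap_π (S₁ S₂ : ShortComplex (ModuleCat.{u} R)) (ψ : S₁ ⟶ S₂) (c : S₁.cycles) :
    ShortComplex.homologyMap ψ (S₁.homologyπ c)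
      = S₂.homologyπ (ShortComplex.cyclesMap ψ c) := by
  have := ConcreteCategory.congr_hom (ShortComplex.homologyπ_naturality ψ) c
  rw [mcomp_apply, mcomp_apply] at this
  exact this

lemma iCycles_cyclesMap (S₁ S₂ : ShortComplex (ModuleCat.{u} R)) (ψ : S₁ ⟶ S₂) (c : S₁.cycles) :
    S₂.iCycles (ShortComplex.cyclesMap ψ c) = ψ.τ₂ (S₁.iCycles c) := by
  have := ConcreteCategory.congr_hom (ShortComplex.cyclesMap_i ψ) c
  rw [mcomp_apply, mcomp_apply] at this
  exact this

lemma sc_quasiIso_iff {S₁ S₂ : ShortComplex (ModuleCat.{u} R)} (ψ : S₁ ⟶ S₂) :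
    ShortComplex.QuasiIso ψ ↔
      ((∀ y : S₂.X₂, S₂.g y = 0 →
          ∃ x : S₁.X₂, S₁.g x = 0 ∧ ∃ z : S₂.X₁, ψ.τ₂ x = y + S₂.f z) ∧
       (∀ x : S₁.X₂, S₁.g x = 0 → (∃ z : S₂.X₁, S₂.f z = ψ.τ₂ x) →
          ∃ w : S₁.X₁, S₁.f w = x)) := by
  rw [ShortComplex.quasiIso_iff, isIso_iff_mono_and_epi, ModuleCat.mono_iff_injective,
    ModuleCat.epi_iff_surjective]
  constructor
  · rintro ⟨hinj, hsurj⟩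
    constructor
    · intro y hy
      obtain ⟨c₂, hc₂⟩ := exists_cycles S₂ y hy
      obtain ⟨h₁, hh₁⟩ := hsurj (S₂.homologyπ c₂)
      obtain ⟨c₁, hc₁⟩ := homologyπ_surjective S₁ h₁
      refine ⟨S₁.iCycles c₁, g_iCycles S₁ c₁, ?_⟩
      have : S₂.homologyπ (ShortComplex.cyclesMap ψ c₁ - c₂) = 0 := by
        rw [map_sub, ← homologyMap_π, hc₁, hh₁, sub_self]
      obtain ⟨z, hz⟩ := (homologyπ_eq_zero_iff S₂ _).1 this
      refine ⟨z, ?_⟩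
      rw [map_sub, iCycles_cyclesMap, hc₂] at hz
      rw [hz]; abel
    · intro x hx hz
      obtain ⟨z, hz⟩ := hz
      obtain ⟨c₁, hc₁⟩ := exists_cycles S₁ x hx
      have h0 : ShortComplex.homologyMap ψ (S₁.homologyπ c₁) = 0 := by
        rw [homologyMap_π]
        refine (homologyπ_eq_zero_iff S₂ _).2 ⟨z, ?_⟩
        rw [iCycles_cyclesMap, hc₁, hz]
      have : S₁.homologyπ c₁ = 0 := by
        apply hinj
        rw [h0, map_zero]
      obtain ⟨w, hw⟩ := (homologyπ_eq_zero_iff S₁ _).1 this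
      exact ⟨w, by rw [hw, hc₁]⟩
  · rintro ⟨hsurj, hinj⟩
    constructor
    · intro a b hab
      have : ∀ h : S₁.homology, ShortComplex.homologyMap ψ h = 0 → h = 0 := by
        intro h hh
        obtain ⟨c₁, hc₁⟩ := homologyπ_surjective S₁ h
        rw [← hc₁] at hh ⊢
        rw [homologyMap_π] at hh
        obtain ⟨z, hz⟩ := (homologyπ_eq_zero_iff S₂ _).1 hh
        rw [iCycles_cyclesMap] at hz
        obtain ⟨w, hw⟩ := hinj (S₁.iCycles c₁) (g_iCycles S₁ c₁) ⟨z, hz⟩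
        exact (homologyπ_eq_zero_iff S₁ _).2 ⟨w, hw⟩
      exact sub_eq_zero.1 (this (a - b) (by rw [map_sub, hab, sub_self]))
    · intro h₂
      obtain ⟨c₂, hc₂⟩ := homologyπ_surjective S₂ h₂
      obtain ⟨x, hx, z, hxz⟩ := hsurj (S₂.iCycles c₂) (g_iCycles S₂ c₂)
      obtain ⟨c₁, hc₁⟩ := exists_cycles S₁ x hx
      refine ⟨S₁.homologyπ c₁, ?_⟩
      rw [homologyMap_π, ← hc₂]
      rw [← sub_eq_zero, ← map_sub]
      refine (homologyπ_eq_zero_iff S₂ _).2 ⟨z, ?_⟩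
      rw [map_sub, iCycles_cyclesMap, hc₁, hxz]
      abel

lemma quasiIsoAt_iff_elementwise {K L : CochainComplex (ModuleCat.{u} R) ℤ} (ψ : K ⟶ L)
    (a b c : ℤ) (hab : b = a + 1) (hbc : c = b + 1) :
    QuasiIsoAt ψ b ↔
      ((∀ y : L.X b, L.d b c y = 0 →
          ∃ x : K.X b, K.d b c x = 0 ∧ ∃ z : L.X a, ψ.f b x = y + L.d a b z) ∧
       (∀ x : K.X b, K.d b c x = 0 → (∃ z : L.X a, L.d a b z = ψ.f b x) →
          ∃ w : K.X a, K.d a b w = x)) := by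
  rw [quasiIsoAt_iff' ψ a b c (by simp [CochainComplex.prev]; omega)
    (by simp [CochainComplex.next]; omega)]
  exact sc_quasiIso_iff ((HomologicalComplex.shortComplexFunctor' _ _ a b c).map ψ)

lemma comm_apply {K L : CochainComplex (ModuleCat.{u} R) ℤ} (ψ : K ⟶ L) (i j : ℤ)
    (x : K.X i) : L.d i j (ψ.f i x) = ψ.f j (K.d i j x) := by
  have := ConcreteCategory.congr_hom (ψ.comm i j) x
  rw [mcomp_apply, mcomp_apply] at this
  exact this

lemma dd_apply (K : CochainComplex (ModuleCat.{u} R) ℤ) (i j k : ℤ) (x : K.X i) :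
    K.d j k (K.d i j x) = 0 := by
  have := ConcreteCategory.congr_hom (K.d_comp_d i j k) x
  rw [mcomp_apply] at this
  simpa using this

/-! ### Transport along equalities of indices, and the abstract tower lemma -/

def tpr {C : ℤ → Type u} {q q' : ℤ} (h : q = q') (x : C q) : C q' := h ▸ x

lemma tpr_tpr {C : ℤ → Type u} {q q' q'' : ℤ} (h : q = q') (h' : q' = q'') (x : C q) :
    tpr h' (tpr h x) = tpr (h.trans h') x := by subst h h'; rfl

section Tower

variable {C0 C1 : ℤ → Type u}
  [∀ q, AddCommGroup (C0 q)] [∀ q, AddCommGroup (C1 q)]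
  (d0 : ∀ q, C0 q →+ C1 q)
  (T0 : ∀ q, C0 (q + 1) →+ C0 q) (T1 : ∀ q, C1 (q + 1) →+ C1 q)

lemma tpr_rel {q q' : ℤ} (h : q = q') (x : C1 q) (x' : C1 (q + 1)) (u : C0 q)
    (hx : x = T1 q x' + d0 q u) :
    tpr h x = T1 q' (tpr (by rw [h]) x') + d0 q' (tpr h u) := by
  subst h; exact hx

/-- downward iteration of the transition maps -/
def dwn : ∀ (k : ℕ) (q : ℤ), C1 (q + (k : ℤ)) → C1 q
  | 0, q, x => tpr (by simp) x
  | (k + 1), q, x => T1 q (dwn k (q + 1) (tpr (by push_cast; ring) x))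

lemma dwn_congr {k k' : ℕ} (h : k = k') (q : ℤ) (x : C1 (q + (k : ℤ))) :
    dwn T1 k q x = dwn T1 k' q (tpr (by rw [h]) x) := by subst h; rfl

variable {T1} in
lemma tower_acyclic
    (hc0 : ∀ (q : ℤ) (u : C0 (q + 1)), d0 q (T0 q u) = T1 q (d0 (q + 1) u))
    {d1 : ∀ q : ℤ, C1 q → Prop}   -- "is a cycle"
    (hstep : ∀ (q : ℤ) (x : C1 q), d1 q x →
      ∃ (x' : C1 (q + 1)) (u : C0 q), d1 (q + 1) x' ∧ x = T1 q x' + d0 q u)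
    (hlim : ∀ z : ∀ q, C1 q, (∀ q, T1 q (z (q + 1)) = z q) → ∀ q, z q = 0)
    (hlim1 : ∀ u : ∀ q, C0 q, ∃ y : ∀ q, C0 q, ∀ q, y q - T0 q (y (q + 1)) = u q)
    (p : ℤ) (x : C1 p) (hx : d1 p x) : ∃ y : C0 p, d0 p y = x := by
  classical
  let Z : ℤ → Type u := fun q => {v : C1 q // d1 q v}
  have hstep' : ∀ (w : Σ q, Z q), ∃ w' : Z (w.1 + 1),
      ∃ u : C0 w.1, w.2.1 = T1 w.1 w'.1 + d0 w.1 u := by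
    rintro ⟨q, v, hv⟩
    obtain ⟨x', u, h1, h2⟩ := hstep q v hv
    exact ⟨⟨x', h1⟩, u, h2⟩
  choose nxt uu hnx using hstep'
  let stepV : (Σ q, Z q) → (Σ q, Z q) := fun w => ⟨w.1 + 1, nxt w⟩
  let w : ℕ → Σ q, Z q := fun k => stepV^[k] ⟨p, x, hx⟩
  have hwsucc : ∀ k, w (k + 1) = stepV (w k) := fun k =>
    Function.iterate_succ_apply' stepV k _
  have hw1 : ∀ k : ℕ, (w k).1 = p + (k : ℤ) := by
    intro k
    induction k with
    | zero => simp [w]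
    | succ k ih =>
      rw [hwsucc k]
      show (w k).1 + 1 = _
      rw [ih]; push_cast; ring
  have hle : ∀ q : ℤ, p ≤ q → (w (q - p).toNat).1 = q := by
    intro q hq; rw [hw1]; omega
  let X : ∀ q : ℤ, C1 q := fun q =>
    if h : p ≤ q then tpr (hle q h) (w (q - p).toNat).2.1
    else dwn T1 (p - q).toNat q (tpr (by omega) x)
  let U : ∀ q : ℤ, C0 q := fun q =>
    if h : p ≤ q then tpr (hle q h) (uu (w (q - p).toNat)) else 0
  have keyk : ∀ (j : ℕ) (q' : ℤ) (e : (w j).1 = q') (k : ℕ), j = k + 1 →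
      ∀ (e' : (w k).1 + 1 = q'), tpr e (w j).2.1 = tpr e' (nxt (w k)).1 := by
    intro j q' e k hj
    subst hj
    revert e
    rw [hwsucc k]
    intro e e'
    rfl
  have key0 : ∀ (j : ℕ), j = 0 → ∀ (q' : ℤ) (e : (w j).1 = q') (e' : p = q'),
      tpr e (w j).2.1 = tpr e' x := by
    intro j hj
    subst hj
    intro q' e e'
    rfl
  have hXp : X p = x := by
    show dite _ _ _ = x
    rw [dif_pos le_rfl]
    rw [key0 (p - p).toNat (by omega) p (hle p le_rfl) rfl]
    rfl
  have hrec : ∀ q, X q = T1 q (X (q + 1)) + d0 q (U q) := by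
    intro q
    by_cases h : p ≤ q
    · have h' : p ≤ q + 1 := by omega
      show dite _ _ _ = T1 q (dite _ _ _) + d0 q (dite _ _ _)
      rw [dif_pos h, dif_pos h', dif_pos h]
      rw [keyk (q + 1 - p).toNat (q + 1) (hle (q + 1) h') (q - p).toNat (by omega)
        (by rw [hle q h])]
      exact tpr_rel d0 T1 (hle q h) _ _ _ (hnx (w (q - p).toNat))
    · show dite _ _ _ = T1 q (dite _ _ _) + d0 q (dite _ _ _)
      rw [dif_neg h, dif_neg h, map_zero, add_zero]
      by_cases h' : p ≤ q + 1
      · rw [dif_pos h']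
        rw [key0 (q + 1 - p).toNat (by omega) (q + 1) (hle (q + 1) h') (by omega)]
        rw [dwn_congr (T1 := T1) (show (p - q).toNat = 0 + 1 by omega)]
        show T1 q (dwn T1 0 (q + 1) _) = _
        show T1 q (tpr _ (tpr _ (tpr _ (tpr _ x)))) = _
        rw [tpr_tpr, tpr_tpr, tpr_tpr]
      · rw [dif_neg h']
        rw [dwn_congr (T1 := T1) (show (p - q).toNat = (p - (q + 1)).toNat + 1 by omega)]
        show T1 q (dwn T1 (p - (q + 1)).toNat (q + 1) (tpr _ (tpr _ (tpr _ x)))) = _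
        rw [tpr_tpr, tpr_tpr]
  obtain ⟨y, hy⟩ := hlim1 U
  have hz : ∀ q, T1 q (d0 (q + 1) (y (q + 1)) - X (q + 1)) = d0 q (y q) - X q := by
    intro q
    rw [map_sub, ← hc0]
    have h1 : T0 q (y (q + 1)) = y q - U q := by rw [← hy q]; abel
    have h2 : T1 q (X (q + 1)) = X q - d0 q (U q) := by rw [hrec q]; abel
    rw [h1, h2, map_sub]
    abel
  have := hlim (fun q => d0 q (y q) - X q) hz p
  exact ⟨y p, by rw [← hXp]; exact sub_eq_zero.1 this⟩

end Tower

end FiltAux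

open FiltAux

/-- **Conservativity of the associated graded on complete filtered complexes.**
Let `φ : E → F` be a morphism of `ℤ`-filtered cochain complexes of `R`-modules
(decreasing filtrations, given by the complexes `Fil^p = E p` with transition maps
`E (p+1) ⟶ E p`, with injective filtration so that the associated graded
`Gr^p = E p / E (p+1)` is computed by the degreewise short exact sequences below).
Assume both filtrations are complete: degreewise, the inverse limit and the derived
inverse limit (`lim¹`) of the towers `⋯ → Fil^{p+1} → Fil^p → ⋯` vanish (so
`Fil^∞ = 0` in the derived sense).  If the induced map `Gr^p E → Gr^p F` is a
quasi-isomorphism for every `p ∈ ℤ`, then `Fil^p E → Fil^p F` is a quasi-isomorphism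
for every `p`. -/
theorem gr_quasiIso_implies_fil_quasiIso_of_complete
    (R : Type u) [Ring R]
    (E F : ℤ → CochainComplex (ModuleCat.{u} R) ℤ)
    (tE : ∀ p : ℤ, E (p + 1) ⟶ E p) (tF : ∀ p : ℤ, F (p + 1) ⟶ F p)
    (φ : ∀ p : ℤ, E p ⟶ F p)
    (hφ : ∀ p : ℤ, tE p ≫ φ p = φ (p + 1) ≫ tF p)
    (GrE GrF : ℤ → CochainComplex (ModuleCat.{u} R) ℤ)
    (πE : ∀ p : ℤ, E p ⟶ GrE p) (πF : ∀ p : ℤ, F p ⟶ GrF p)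
    (Grφ : ∀ p : ℤ, GrE p ⟶ GrF p)
    (hGrφ : ∀ p : ℤ, πE p ≫ Grφ p = φ p ≫ πF p)
    -- the filtration of `E` is injective with quotients `Gr^p E`:
    (hseE : ∀ (p n : ℤ), Function.Injective ((tE p).f n) ∧
      Function.Surjective ((πE p).f n) ∧
      ∀ x : (E p).X n, ((πE p).f n) x = 0 ↔ ∃ y, ((tE p).f n) y = x)
    -- the filtration of `F` is injective with quotients `Gr^p F`:
    (hseF : ∀ (p n : ℤ), Function.Injective ((tF p).f n) ∧
      Function.Surjective ((πF p).f n) ∧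
      ∀ x : (F p).X n, ((πF p).f n) x = 0 ↔ ∃ y, ((tF p).f n) y = x)
    -- completeness of `E` : degreewise `lim = 0` and `lim¹ = 0`:
    (hlimE : ∀ (n : ℤ) (x : ∀ p : ℤ, (E p).X n),
      (∀ p : ℤ, ((tE p).f n) (x (p + 1)) = x p) → ∀ p, x p = 0)
    (hlim1E : ∀ (n : ℤ) (y : ∀ p : ℤ, (E p).X n),
      ∃ x : ∀ p : ℤ, (E p).X n, ∀ p : ℤ, x p - ((tE p).f n) (x (p + 1)) = y p)
    -- completeness of `F` : degreewise `lim = 0` and `lim¹ = 0`: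
    (hlimF : ∀ (n : ℤ) (x : ∀ p : ℤ, (F p).X n),
      (∀ p : ℤ, ((tF p).f n) (x (p + 1)) = x p) → ∀ p, x p = 0)
    (hlim1F : ∀ (n : ℤ) (y : ∀ p : ℤ, (F p).X n),
      ∃ x : ∀ p : ℤ, (F p).X n, ∀ p : ℤ, x p - ((tF p).f n) (x (p + 1)) = y p)
    -- the associated graded maps are quasi-isomorphisms:
    (hGr : ∀ p : ℤ, QuasiIso (Grφ p)) :
    ∀ p : ℤ, QuasiIso (φ p) := by
  classical
  have hφ' : ∀ (p m : ℤ) (x : (E (p + 1)).X m),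
      (φ p).f m ((tE p).f m x) = (tF p).f m ((φ (p + 1)).f m x) := by
    intro p m x
    have h1 := congrArg (fun ψ => HomologicalComplex.Hom.f ψ m) (hφ p)
    simp only [HomologicalComplex.comp_f] at h1
    have h2 := ConcreteCategory.congr_hom h1 x
    rw [mcomp_apply, mcomp_apply] at h2
    exact h2
  have hGrφ' : ∀ (p m : ℤ) (x : (E p).X m),
      (Grφ p).f m ((πE p).f m x) = (πF p).f m ((φ p).f m x) := by
    intro p m x
    have h1 := congrArg (fun ψ => HomologicalComplex.Hom.f ψ m) (hGrφ p)
    simp only [HomologicalComplex.comp_f] at h1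
    have h2 := ConcreteCategory.congr_hom h1 x
    rw [mcomp_apply, mcomp_apply] at h2
    exact h2
  -- the cone acyclicity statement
  have cone : ∀ (a b c d : ℤ), b = a + 1 → c = b + 1 → d = c + 1 →
      ∀ (p : ℤ) (e : (E p).X c) (f : (F p).X b),
        (E p).d c d e = 0 → (F p).d b c f = (φ p).f c e →
        ∃ (e' : (E p).X b) (f' : (F p).X a),
          (E p).d b c e' = -e ∧ (F p).d a b f' - (φ p).f b e' = f := by
    intro a b c d hab hbc hcd p e f he hf
    let C0 : ℤ → Type u := fun q => ((E q).X b × (F q).X a)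
    let C1 : ℤ → Type u := fun q => ((E q).X c × (F q).X b)
    let D0 : ∀ q, C0 q →+ C1 q := fun q => AddMonoidHom.mk'
      (fun v => (-(E q).d b c v.1, (F q).d a b v.2 - (φ q).f b v.1))
      (by
        intro v w
        refine Prod.ext ?_ ?_
        · show -(E q).d b c (v.1 + w.1) = -(E q).d b c v.1 + -(E q).d b c w.1
          rw [map_add]; abel
        · show (F q).d a b (v.2 + w.2) - (φ q).f b (v.1 + w.1)
            = ((F q).d a b v.2 - (φ q).f b v.1) + ((F q).d a b w.2 - (φ q).f b w.1)
          rw [map_add, map_add]; abel)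
    let T0 : ∀ q, C0 (q + 1) →+ C0 q := fun q => AddMonoidHom.mk'
      (fun v => ((tE q).f b v.1, (tF q).f a v.2))
      (by
        intro v w
        refine Prod.ext ?_ ?_
        · show (tE q).f b (v.1 + w.1) = _ + _
          rw [map_add]
        · show (tF q).f a (v.2 + w.2) = _ + _
          rw [map_add])
    let T1 : ∀ q, C1 (q + 1) →+ C1 q := fun q => AddMonoidHom.mk'
      (fun v => ((tE q).f c v.1, (tF q).f b v.2))
      (by
        intro v w
        refine Prod.ext ?_ ?_
        · show (tE q).f c (v.1 + w.1) = _ + _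
          rw [map_add]
        · show (tF q).f b (v.2 + w.2) = _ + _
          rw [map_add])
    have hc0 : ∀ (q : ℤ) (u : C0 (q + 1)), D0 q (T0 q u) = T1 q (D0 (q + 1) u) := by
      intro q v
      refine Prod.ext ?_ ?_
      · show -(E q).d b c ((tE q).f b v.1) = (tE q).f c (-(E (q + 1)).d b c v.1)
        rw [map_neg, comm_apply]
      · show (F q).d a b ((tF q).f a v.2) - (φ q).f b ((tE q).f b v.1)
          = (tF q).f b ((F (q + 1)).d a b v.2 - (φ (q + 1)).f b v.1)
        rw [map_sub, comm_apply, hφ']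
    have hstep : ∀ (q : ℤ) (x : C1 q),
        ((E q).d c d x.1 = 0 ∧ (F q).d b c x.2 = (φ q).f c x.1) →
        ∃ (x' : C1 (q + 1)) (u : C0 q),
          ((E (q + 1)).d c d x'.1 = 0 ∧ (F (q + 1)).d b c x'.2 = (φ (q + 1)).f c x'.1) ∧
            x = T1 q x' + D0 q u := by
      rintro q ⟨e0, f0⟩ ⟨he0, hf0⟩
      have hq := (quasiIso_iff (Grφ q)).1 (hGr q)
      have hinjc := ((quasiIsoAt_iff_elementwise (Grφ q) b c d hbc hcd).1 (hq c)).2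
      have hsurjb := ((quasiIsoAt_iff_elementwise (Grφ q) a b c hab hbc).1 (hq b)).1
      have hpe : (GrE q).d c d ((πE q).f c e0) = 0 := by
        rw [comm_apply, he0, map_zero]
      obtain ⟨abar, habar⟩ := hinjc ((πE q).f c e0) hpe
        ⟨(πF q).f b f0, by rw [comm_apply, hf0, hGrφ']⟩
      set gbar := (πF q).f b f0 - (Grφ q).f b abar with hgbardef
      have hgbar : (GrF q).d b c gbar = 0 := by
        rw [hgbardef, map_sub, comm_apply, hf0, comm_apply (Grφ q), habar, hGrφ', sub_self]
      obtain ⟨xbar, hxbarcyc, zbar, hxbar⟩ := hsurjb (-gbar) (by rw [map_neg, hgbar, neg_zero])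
      obtain ⟨uE, huE⟩ := (hseE q b).2.1 (-abar + xbar)
      obtain ⟨uF, huF⟩ := (hseF q a).2.1 zbar
      have he2 : (πE q).f c (e0 + (E q).d b c uE) = 0 := by
        rw [map_add, ← comm_apply (πE q) b c, huE, map_add, map_neg, habar, hxbarcyc,
          add_zero, add_neg_cancel]
      obtain ⟨e1, he1⟩ := ((hseE q c).2.2 _).1 he2
      have hf2 : (πF q).f b (f0 - (F q).d a b uF + (φ q).f b uE) = 0 := by
        rw [map_add, map_sub, ← comm_apply (πF q) a b, huF, ← hGrφ', huE, map_add,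
          map_neg, hxbar, hgbardef]
        abel
      obtain ⟨f1, hf1⟩ := ((hseF q b).2.2 _).1 hf2
      refine ⟨(e1, f1), (uE, uF), ⟨?_, ?_⟩, ?_⟩
      · apply (hseE q d).1
        rw [← comm_apply (tE q) c d, he1, map_zero, map_add, he0, zero_add, dd_apply]
      · apply (hseF q c).1
        rw [← comm_apply (tF q) b c, hf1, ← hφ', he1, map_add, map_sub, hf0,
          dd_apply, map_add, ← comm_apply (φ q) b c]
        abel
      · refine Prod.ext ?_ ?_
        · show e0 = (tE q).f c e1 + -(E q).d b c uE
          rw [he1]; abel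
        · show f0 = (tF q).f b f1 + ((F q).d a b uF - (φ q).f b uE)
          rw [hf1]; abel
    have hlim' : ∀ z : ∀ q, C1 q, (∀ q, T1 q (z (q + 1)) = z q) → ∀ q, z q = 0 := by
      intro z hz q
      have h1 := hlimE c (fun q => (z q).1) (fun q => congrArg Prod.fst (hz q)) q
      have h2 := hlimF b (fun q => (z q).2) (fun q => congrArg Prod.snd (hz q)) q
      exact Prod.ext h1 h2
    have hlim1' : ∀ v : ∀ q, C0 q, ∃ y : ∀ q, C0 q, ∀ q, y q - T0 q (y (q + 1)) = v q := by
      intro v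
      obtain ⟨yE, hyE⟩ := hlim1E b (fun q => (v q).1)
      obtain ⟨yF, hyF⟩ := hlim1F a (fun q => (v q).2)
      exact ⟨fun q => (yE q, yF q), fun q => Prod.ext (hyE q) (hyF q)⟩
    obtain ⟨y, hy⟩ := tower_acyclic D0 T0 (T1 := T1) hc0
      (d1 := fun q v => (E q).d c d v.1 = 0 ∧ (F q).d b c v.2 = (φ q).f c v.1)
      hstep hlim' hlim1' p (e, f) ⟨he, hf⟩
    refine ⟨y.1, y.2, ?_, congrArg Prod.snd hy⟩
    have h1 : -(E p).d b c y.1 = e := congrArg Prod.fst hy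
    rw [← h1]; abel
  -- conclude
  intro p
  rw [quasiIso_iff]
  intro n
  rw [quasiIsoAt_iff_elementwise (φ p) (n - 1) n (n + 1) (by omega) rfl]
  constructor
  · intro y hy
    obtain ⟨e', f', h1, h2⟩ := cone (n - 1) n (n + 1) (n + 2) (by omega) rfl (by omega) p 0 y
      (map_zero _) (by rw [hy, map_zero])
    refine ⟨-e', by rw [map_neg, h1, neg_zero, neg_zero], -f', ?_⟩
    rw [map_neg, map_neg, ← h2]
    abel
  · rintro x hx ⟨z, hz⟩
    obtain ⟨e', f', h1, h2⟩ := cone (n - 2) (n - 1) n (n + 1) (by omega) (by omega) rfl p x z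
      hx hz
    exact ⟨-e', by rw [map_neg, h1, neg_neg]⟩
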